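/- arXiv:2109.01779 — 2 statements merged into one kernel-verified Lean document; each statement's English description precedes it below -/
import Mathlib

section
/- If τ is a symmetric 2×2 real matrix such that n_jᵀ τ n_j = 0 for j = 1, 2, 3, then τ = 0 (unisolvence of the lowest-order Hellan–Herrmann–Johnson degrees of freedom on a triangle). -/
noncomputable section
open MeasureTheory

namespace PaperStmt

/-- Euclidean dot product on `ℝ²`. -/
def dotp (v w : ℝ × ℝ) : ℝ := v.1 * w.1 + v.2 * w.2

/-- Euclidean length on `ℝ²`. -/
def len (v : ℝ × ℝ) : ℝ := Real.sqrt (v.1 ^ 2 + v.2 ^ 2)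

/-- Cross product (determinant) of two planar vectors. -/
def crossp (v w : ℝ × ℝ) : ℝ := v.1 * w.2 - v.2 * w.1

/-- The vertices `p 0, p 1, p 2` form a nondegenerate triangle listed counterclockwise. -/
def Ccw (p : Fin 3 → ℝ × ℝ) : Prop := 0 < crossp (p 1 - p 0) (p 2 - p 0)

/-- Vector of the edge `e_i` opposite vertex `p i`, oriented counterclockwise
(from `p (i+1)` to `p (i−1)`). -/
def edgeVec (p : Fin 3 → ℝ × ℝ) (i : Fin 3) : ℝ × ℝ := p (i - 1) - p (i + 1)

/-- Length `|e_i|` of the edge opposite vertex `p i`. -/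
def elen (p : Fin 3 → ℝ × ℝ) (i : Fin 3) : ℝ := len (edgeVec p i)

/-- Unit tangent `t_i = (p_{i−1} − p_{i+1})/|e_i|` of edge `e_i`. -/
def tvec (p : Fin 3 → ℝ × ℝ) (i : Fin 3) : ℝ × ℝ := (elen p i)⁻¹ • edgeVec p i

/-- Outward unit normal `n_i` of edge `e_i` (clockwise rotation of the tangent,
which points outward for a counterclockwise triangle). -/
def nvec (p : Fin 3 → ℝ × ℝ) (i : Fin 3) : ℝ × ℝ := ((tvec p i).2, -(tvec p i).1)

/-- Interior angle `θ_i` of the triangle at the vertex `p i`. -/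
def angleAt (p : Fin 3 → ℝ × ℝ) (i : Fin 3) : ℝ :=
  Real.arccos (dotp (p (i + 1) - p i) (p (i - 1) - p i) /
    (len (p (i + 1) - p i) * len (p (i - 1) - p i)))

/-- Outer product `v wᵀ` of two planar (column) vectors, as a `2 × 2` matrix. -/
def outerProd (v w : ℝ × ℝ) : Matrix (Fin 2) (Fin 2) ℝ :=
  !![v.1 * w.1, v.1 * w.2; v.2 * w.1, v.2 * w.2]

/-- Basis matrices `φ_HHJ^i = −(1/(2 sin θ_{i−1} sin θ_{i+1})) (t_{i−1} t_{i+1}ᵀ + t_{i+1} t_{i−1}ᵀ)`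
of the lowest-order Hellan–Herrmann–Johnson element. -/
def phiHHJ (p : Fin 3 → ℝ × ℝ) (i : Fin 3) : Matrix (Fin 2) (Fin 2) ℝ :=
  (-(2 * Real.sin (angleAt p (i - 1)) * Real.sin (angleAt p (i + 1)))⁻¹) •
    (outerProd (tvec p (i - 1)) (tvec p (i + 1)) + outerProd (tvec p (i + 1)) (tvec p (i - 1)))

/-- The quadratic form `vᵀ τ v` of a `2 × 2` matrix on a planar vector. -/
def qf (τ : Matrix (Fin 2) (Fin 2) ℝ) (v : ℝ × ℝ) : ℝ :=
  v.1 * (τ 0 0 * v.1 + τ 0 1 * v.2) + v.2 * (τ 1 0 * v.1 + τ 1 1 * v.2)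

end PaperStmt

/-! The outward normals are nonzero multiples of the rotated edge vectors `perp e_i`, and these
sum to zero. Hence the quadratic form `v ↦ vᵀ τ v` vanishes at `u`, `v` and `u + v` for two
linearly independent vectors `u`, `v`; so does its polar form at `(u, v)`, and three linear
conditions on the three entries of a symmetric `τ`, with determinant a power of `crossp u v`,
force `τ = 0`. -/

namespace PaperStmt

/-- Clockwise rotation by a right angle, so that `nvec p i = perp (tvec p i)`. -/
def perp (v : ℝ × ℝ) : ℝ × ℝ := (v.2, -v.1)

lemma perp_add (v w : ℝ × ℝ) : perp (v + w) = perp v + perp w := by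
  simp only [perp, Prod.fst_add, Prod.snd_add, neg_add, Prod.mk_add_mk]

lemma perp_neg (v : ℝ × ℝ) : perp (-v) = -perp v := by
  simp only [perp, Prod.fst_neg, Prod.snd_neg, Prod.neg_mk]

lemma perp_smul (s : ℝ) (v : ℝ × ℝ) : perp (s • v) = s • perp v := by
  simp only [perp, Prod.smul_fst, Prod.smul_snd, smul_eq_mul, Prod.smul_mk, mul_neg]

lemma crossp_perp (v w : ℝ × ℝ) : crossp (perp v) (perp w) = crossp v w := by
  simp only [crossp, perp]
  ring

lemma qf_smul (τ : Matrix (Fin 2) (Fin 2) ℝ) (s : ℝ) (v : ℝ × ℝ) :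
    qf τ (s • v) = s ^ 2 * qf τ v := by
  simp only [qf, Prod.smul_fst, Prod.smul_snd, smul_eq_mul]
  ring

lemma qf_neg (τ : Matrix (Fin 2) (Fin 2) ℝ) (v : ℝ × ℝ) : qf τ (-v) = qf τ v := by
  simpa using qf_smul τ (-1) v

lemma len_ne_zero {v : ℝ × ℝ} (hv : v ≠ 0) : len v ≠ 0 := by
  rw [len, Real.sqrt_ne_zero']
  contrapose! hv
  have h1 : v.1 = 0 := by nlinarith [sq_nonneg v.1, sq_nonneg v.2]
  have h2 : v.2 = 0 := by nlinarith [sq_nonneg v.1, sq_nonneg v.2]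
  exact Prod.ext h1 h2

section edges

variable (p : Fin 3 → ℝ × ℝ)

lemma edgeVec_zero : edgeVec p 0 = p 2 - p 1 := rfl

lemma edgeVec_one : edgeVec p 1 = p 0 - p 2 := rfl

lemma edgeVec_two : edgeVec p 2 = p 1 - p 0 := rfl

lemma edgeVec_add_add : edgeVec p 0 + edgeVec p 1 + edgeVec p 2 = 0 := by
  rw [edgeVec_zero, edgeVec_one, edgeVec_two]
  abel

lemma crossp_edgeVec_succ (i : Fin 3) :
    crossp (edgeVec p i) (edgeVec p (i + 1)) = crossp (p 1 - p 0) (p 2 - p 0) := by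
  fin_cases i <;>
    simp only [Fin.zero_eta, Fin.mk_one, Fin.reduceFinMk, Fin.isValue, Fin.reduceAdd, edgeVec_zero,
      edgeVec_one, edgeVec_two, crossp, Prod.fst_sub, Prod.snd_sub] <;>
    ring

end edges

lemma elen_ne_zero {p : Fin 3 → ℝ × ℝ} (hp : Ccw p) (i : Fin 3) : elen p i ≠ 0 := by
  refine len_ne_zero fun h => ne_of_gt hp ?_
  rw [← crossp_edgeVec_succ p i, h]
  simp [crossp]

lemma qf_nvec (τ : Matrix (Fin 2) (Fin 2) ℝ) (p : Fin 3 → ℝ × ℝ) (i : Fin 3) :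
    qf τ (nvec p i) = (elen p i)⁻¹ ^ 2 * qf τ (perp (edgeVec p i)) :=
  (congrArg (qf τ) (perp_smul _ _)).trans (qf_smul τ _ _)

lemma eq_zero_of_qf_eq_zero {τ : Matrix (Fin 2) (Fin 2) ℝ} (hτ : τ.IsSymm) {u v : ℝ × ℝ}
    (hcross : crossp u v ≠ 0) (hu : qf τ u = 0) (hv : qf τ v = 0) (huv : qf τ (u + v) = 0) :
    τ = 0 := by
  have hsymm : τ 1 0 = τ 0 1 := hτ.apply 0 1
  simp only [qf, crossp, Prod.fst_add, Prod.snd_add, hsymm] at hu hv huv hcross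
  have hpolar : τ 0 0 * u.1 * v.1 + τ 0 1 * (u.1 * v.2 + u.2 * v.1) + τ 1 1 * u.2 * v.2 = 0 := by
    linear_combination (huv - hu - hv) / 2
  have cancel {x : ℝ} (hx : x * (u.1 * v.2 - u.2 * v.1) ^ 2 = 0) : x = 0 :=
    (mul_eq_zero.1 hx).resolve_right (pow_ne_zero 2 hcross)
  have h00 : τ 0 0 = 0 := cancel <| by
    linear_combination v.2 ^ 2 * hu + u.2 ^ 2 * hv - 2 * u.2 * v.2 * hpolar
  have h01 : τ 0 1 = 0 := cancel <| by
    linear_combination -(v.1 * v.2) * hu - u.1 * u.2 * hv + (u.1 * v.2 + u.2 * v.1) * hpolar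
  have h11 : τ 1 1 = 0 := cancel <| by
    linear_combination v.1 ^ 2 * hu + u.1 ^ 2 * hv - 2 * u.1 * v.1 * hpolar
  ext i j
  fin_cases i <;> fin_cases j
  exacts [h00, h01, hsymm.trans h01, h11]

end PaperStmt

open PaperStmt in
/-- Unisolvence of the lowest-order Hellan–Herrmann–Johnson degrees of freedom:
a symmetric `2 × 2` matrix with `n_jᵀ τ n_j = 0` for all three edge normals is zero. -/
theorem HHJ_unisolvence (p : Fin 3 → ℝ × ℝ) (hp : Ccw p)
    (τ : Matrix (Fin 2) (Fin 2) ℝ) (hτ : τ.IsSymm)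
    (h0 : ∀ j : Fin 3, qf τ (nvec p j) = 0) : τ = 0 := by
  have hperp : ∀ j, qf τ (perp (edgeVec p j)) = 0 := fun j => by
    simpa [qf_nvec, elen_ne_zero hp j] using h0 j
  refine eq_zero_of_qf_eq_zero hτ (u := perp (edgeVec p 0)) (v := perp (edgeVec p 1))
    ?_ (hperp 0) (hperp 1) ?_
  · rw [crossp_perp]
    exact (crossp_edgeVec_succ p 0).trans_ne (ne_of_gt hp)
  · rw [← perp_add, eq_neg_of_add_eq_zero_left (edgeVec_add_add p), perp_neg, qf_neg]
    exact hperp 2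
end
end

section
/- Let K be a nondegenerate triangle in ℝ², let r > 0, b ∈ ℝ², ε ∈ {+1, −1}, and let K' be the triangle with vertices p_i' = ε r p_i + b (which are again listed counterclockwise). Then γ^{ij}(K') = γ^{ij}(K) for all 1 ≤ i, j ≤ 4; in particular the constants γ^{ij} are invariant under translations, dilations and point reflections of the triangle, hence take the same value on all elements of a uniform triangulation and are independent of the mesh size. -/
/-!
Write `T x = c • x + b` with `c ≠ 0` and `σ = c / |c| = ±1`. The area scales by `c²`, unit
tangents and normals by `σ`, and angles (hence the basis matrices `φ_HHJ^i`) are unchanged.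
Since `φ_i' ∘ T = (c³ / |c|) φ_i`, the chain rule gives `∇²φ_i' ∘ T = σ ∇²φ_i`; the edge
moments of the interpolant pick up `σ³ = σ`, so `(I - Π_HHJ')∇²φ_i' ∘ T = σ (I - Π_HHJ)∇²φ_i`.
The integrand of `γ^{ij}(K')` at `T x` is therefore `σ² = 1` times that of `γ^{ij}(K)` at `x`,
and the Jacobian `c²` of the substitution cancels against the area.
-/

noncomputable section
open MeasureTheory

namespace PaperStmt

/-- Directional derivative of `f` along `v`. -/
def dderiv (v : ℝ × ℝ) (f : ℝ × ℝ → ℝ) : ℝ × ℝ → ℝ := fun x => fderiv ℝ f x v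

/-- Second directional derivative `D²f[u, v]`. -/
def d2 (u v : ℝ × ℝ) (f : ℝ × ℝ → ℝ) : ℝ × ℝ → ℝ := dderiv u (dderiv v f)

/-- Third directional derivative `D³f[u, v, w]`. -/
def d3 (u v w : ℝ × ℝ) (f : ℝ × ℝ → ℝ) : ℝ × ℝ → ℝ := dderiv u (dderiv v (dderiv w f))

end PaperStmt

namespace PaperStmt

/-- Area `|K|` of the (counterclockwise) triangle with vertices `p`. -/
def area (p : Fin 3 → ℝ × ℝ) : ℝ := crossp (p 1 - p 0) (p 2 - p 0) / 2

/-- Centroid `M_K` of the triangle with vertices `p`. -/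
def centroid (p : Fin 3 → ℝ × ℝ) : ℝ × ℝ := (3 : ℝ)⁻¹ • (p 0 + p 1 + p 2)

/-- The (closed) triangle `K` with vertices `p`, as a subset of `ℝ²`. -/
def tri (p : Fin 3 → ℝ × ℝ) : Set (ℝ × ℝ) := convexHull ℝ {p 0, p 1, p 2}

/-- The cubic polynomials `φ₁, φ₂, φ₃, φ₄` centered at the centroid:
`φ₁ = (x₁−M₁)³/(6|K|^{1/2})`, `φ₂ = (x₁−M₁)²(x₂−M₂)/(2|K|^{1/2})`,
`φ₃ = (x₁−M₁)(x₂−M₂)²/(2|K|^{1/2})`, `φ₄ = (x₂−M₂)³/(6|K|^{1/2})`. -/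
def phiK (p : Fin 3 → ℝ × ℝ) : Fin 4 → ℝ × ℝ → ℝ :=
  ![fun x => (x.1 - (centroid p).1) ^ 3 / (6 * Real.sqrt (area p)),
    fun x => (x.1 - (centroid p).1) ^ 2 * (x.2 - (centroid p).2) / (2 * Real.sqrt (area p)),
    fun x => (x.1 - (centroid p).1) * (x.2 - (centroid p).2) ^ 2 / (2 * Real.sqrt (area p)),
    fun x => (x.2 - (centroid p).2) ^ 3 / (6 * Real.sqrt (area p))]

/-- Hessian `∇²f` of a scalar function on `ℝ²`, as a `2 × 2` matrix field. -/
def hess (f : ℝ × ℝ → ℝ) (x : ℝ × ℝ) : Matrix (Fin 2) (Fin 2) ℝ :=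
  !![d2 (1, 0) (1, 0) f x, d2 (1, 0) (0, 1) f x;
     d2 (0, 1) (1, 0) f x, d2 (0, 1) (0, 1) f x]

/-- Frobenius inner product `A : B` of two `2 × 2` matrices. -/
def frob (A B : Matrix (Fin 2) (Fin 2) ℝ) : ℝ := ∑ i : Fin 2, ∑ j : Fin 2, A i j * B i j

/-- Mean value `(1/|e_j|) ∫_{e_j} g ds` of `g` over the edge `e_j` (with respect to
arclength measure), computed by the unit-speed-normalized parametrization of `e_j`. -/
def edgeAvg (p : Fin 3 → ℝ × ℝ) (j : Fin 3) (g : ℝ × ℝ → ℝ) : ℝ :=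
  ∫ s in (0:ℝ)..1, g (p (j + 1) + s • (p (j - 1) - p (j + 1)))

/-- The Hellan–Herrmann–Johnson interpolant
`Π_HHJ τ = Σ_{j=1}^{3} ((1/|e_j|) ∫_{e_j} n_jᵀ τ n_j ds) φ_HHJ^j` of a
matrix-valued field `τ`, a constant symmetric matrix. -/
def PiHHJ (p : Fin 3 → ℝ × ℝ) (τ : ℝ × ℝ → Matrix (Fin 2) (Fin 2) ℝ) :
    Matrix (Fin 2) (Fin 2) ℝ :=
  ∑ j : Fin 3, edgeAvg p j (fun x => qf (τ x) (nvec p j)) • phiHHJ p j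

/-- The constants `γ^{ij} = (1/|K|) ∫_K ((I − Π_HHJ)∇²φ_i) : ((I − Π_HHJ)∇²φ_j) dx`. -/
def gammaHHJ (p : Fin 3 → ℝ × ℝ) (i j : Fin 4) : ℝ :=
  (area p)⁻¹ *
    ∫ x in tri p,
      frob (hess (phiK p i) x - PiHHJ p (hess (phiK p i)))
           (hess (phiK p j) x - PiHHJ p (hess (phiK p j)))

/-- Coefficients `a₁ = |K|^{1/2} ∂³w/∂x₁³`, `a₂ = |K|^{1/2} ∂³w/∂x₁²∂x₂`,
`a₃ = |K|^{1/2} ∂³w/∂x₁∂x₂²`, `a₄ = |K|^{1/2} ∂³w/∂x₂³` (the third partial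
derivatives of a cubic polynomial being constant, they are evaluated at `0`). -/
def acoef (p : Fin 3 → ℝ × ℝ) (w : ℝ × ℝ → ℝ) : Fin 4 → ℝ :=
  ![Real.sqrt (area p) * d3 (1, 0) (1, 0) (1, 0) w 0,
    Real.sqrt (area p) * d3 (1, 0) (1, 0) (0, 1) w 0,
    Real.sqrt (area p) * d3 (1, 0) (0, 1) (0, 1) w 0,
    Real.sqrt (area p) * d3 (0, 1) (0, 1) (0, 1) w 0]

end PaperStmt

section ChangeOfVariables

variable {E F : Type*} [NormedAddCommGroup E] [NormedSpace ℝ E] [FiniteDimensional ℝ E]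
  [MeasurableSpace E] [BorelSpace E] (μ : Measure E) [μ.IsAddHaarMeasure]
  [NormedAddCommGroup F] [NormedSpace ℝ F]

theorem MeasureTheory.setIntegral_image_smul_add {s : Set E} (hs : MeasurableSet s) {c : ℝ}
    (hc : c ≠ 0) (b : E) (g : E → F) :
    ∫ x in (fun x => c • x + b) '' s, g x ∂μ =
      |c ^ Module.finrank ℝ E| • ∫ x in s, g (c • x + b) ∂μ := by
  have hT : ∀ x ∈ s, HasFDerivWithinAt (fun x => c • x + b)
      (c • ContinuousLinearMap.id ℝ E) s x := fun x _ =>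
    (((hasFDerivAt_id x).const_smul c).add_const b).hasFDerivWithinAt
  have hinj : Set.InjOn (fun x => c • x + b) s := fun x _ y _ hxy =>
    smul_right_injective E hc (add_right_cancel hxy)
  rw [integral_image_eq_integral_abs_det_fderiv_smul μ hs hT hinj, ← integral_smul]
  simp [ContinuousLinearMap.det]

end ChangeOfVariables

namespace PaperStmt

section Calculus

variable (f : ℝ × ℝ → ℝ)

-- No smoothness is needed: both sides vanish where `f` is not differentiable.
theorem dderiv_comp_homothety (c : ℝ) (b v : ℝ × ℝ) :
    dderiv v (fun y => f (c • y + b)) = fun x => c * dderiv v f (c • x + b) := by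
  funext x
  rw [dderiv, fderiv_comp_smul (f := fun z => f (z + b)), fderiv_comp_add_right]
  rfl

theorem dderiv_const_mul (k : ℝ) (v : ℝ × ℝ) :
    dderiv v (fun y => k * f y) = fun x => k * dderiv v f x := by
  funext x
  change fderiv ℝ (k • f) x v = _
  rw [fderiv_const_smul_field]
  rfl

theorem hess_comp_homothety (c : ℝ) (b x : ℝ × ℝ) :
    hess (fun y => f (c • y + b)) x = c ^ 2 • hess f (c • x + b) := by
  ext i j
  fin_cases i <;> fin_cases j <;>
    simp [hess, d2, dderiv_comp_homothety, dderiv_const_mul] <;> ring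

theorem hess_const_mul (k : ℝ) (x : ℝ × ℝ) :
    hess (fun y => k * f y) x = k • hess f x := by
  ext i j
  fin_cases i <;> fin_cases j <;> simp [hess, d2, dderiv_const_mul]

end Calculus

theorem div_abs_sq {a : ℝ} (ha : a ≠ 0) : (a / |a|) ^ 2 = 1 := by
  rw [div_pow, sq_abs, div_self (pow_ne_zero 2 ha)]

section Scaling

variable (a : ℝ)

theorem crossp_smul_smul (u v : ℝ × ℝ) : crossp (a • u) (a • v) = a ^ 2 * crossp u v := by
  simp only [crossp, Prod.smul_fst, Prod.smul_snd, smul_eq_mul]; ring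

theorem dotp_smul_smul (u v : ℝ × ℝ) : dotp (a • u) (a • v) = a ^ 2 * dotp u v := by
  simp only [dotp, Prod.smul_fst, Prod.smul_snd, smul_eq_mul]; ring

theorem len_smul (u : ℝ × ℝ) : len (a • u) = |a| * len u := by
  simp only [len, Prod.smul_fst, Prod.smul_snd, smul_eq_mul]
  rw [← Real.sqrt_sq_eq_abs, ← Real.sqrt_mul (sq_nonneg a)]
  ring_nf

theorem outerProd_smul_smul (u v : ℝ × ℝ) :
    outerProd (a • u) (a • v) = a ^ 2 • outerProd u v := by
  ext i j
  fin_cases i <;> fin_cases j <;>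
    simp [outerProd, Prod.smul_fst, Prod.smul_snd] <;> ring

theorem qf_smul_smul (τ : Matrix (Fin 2) (Fin 2) ℝ) (v : ℝ × ℝ) :
    qf (a • τ) (a • v) = a ^ 3 * qf τ v := by
  simp only [qf, Matrix.smul_apply, Prod.smul_fst, Prod.smul_snd, smul_eq_mul]; ring

theorem frob_smul_smul (A B : Matrix (Fin 2) (Fin 2) ℝ) :
    frob (a • A) (a • B) = a ^ 2 * frob A B := by
  simp only [frob, Matrix.smul_apply, smul_eq_mul, Fin.sum_univ_two]; ring

end Scaling

section Homothety

variable (p : Fin 3 → ℝ × ℝ) (c : ℝ) (b : ℝ × ℝ)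

theorem area_homothety : area (fun k => c • p k + b) = c ^ 2 * area p := by
  simp only [area, add_sub_add_right_eq_sub, ← smul_sub, crossp_smul_smul]; ring

theorem ccw_homothety (hc : c ≠ 0) (hp : Ccw p) : Ccw (fun k => c • p k + b) := by
  unfold Ccw at hp ⊢
  simp only [add_sub_add_right_eq_sub, ← smul_sub, crossp_smul_smul]
  positivity

theorem centroid_homothety : centroid (fun k => c • p k + b) = c • centroid p + b := by
  simp only [centroid]; module

theorem edgeVec_homothety (i : Fin 3) :
    edgeVec (fun k => c • p k + b) i = c • edgeVec p i := by
  simp only [edgeVec, add_sub_add_right_eq_sub, ← smul_sub]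

theorem elen_homothety (i : Fin 3) : elen (fun k => c • p k + b) i = |c| * elen p i := by
  simp only [elen, edgeVec_homothety, len_smul]

theorem tvec_homothety (i : Fin 3) :
    tvec (fun k => c • p k + b) i = (c / |c|) • tvec p i := by
  simp only [tvec, elen_homothety, edgeVec_homothety, smul_smul, mul_inv]
  ring_nf

theorem nvec_homothety (i : Fin 3) :
    nvec (fun k => c • p k + b) i = (c / |c|) • nvec p i := by
  simp only [nvec, tvec_homothety, Prod.smul_fst, Prod.smul_snd, smul_eq_mul, Prod.smul_mk,
    mul_neg]

theorem angleAt_homothety (hc : c ≠ 0) (i : Fin 3) :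
    angleAt (fun k => c • p k + b) i = angleAt p i := by
  simp only [angleAt, add_sub_add_right_eq_sub, ← smul_sub, dotp_smul_smul, len_smul]
  rw [mul_mul_mul_comm, ← sq, sq_abs, mul_div_mul_left _ _ (pow_ne_zero 2 hc)]

theorem phiHHJ_homothety (hc : c ≠ 0) (i : Fin 3) :
    phiHHJ (fun k => c • p k + b) i = phiHHJ p i := by
  simp only [phiHHJ, angleAt_homothety p c b hc, tvec_homothety, outerProd_smul_smul,
    div_abs_sq hc, one_smul]

theorem edgeAvg_homothety (j : Fin 3) (g : ℝ × ℝ → ℝ) :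
    edgeAvg (fun k => c • p k + b) j g = edgeAvg p j (fun x => g (c • x + b)) := by
  simp only [edgeAvg, add_sub_add_right_eq_sub, ← smul_sub]
  congr with s
  congr 1
  module

theorem PiHHJ_homothety (hc : c ≠ 0) {τ τ' : ℝ × ℝ → Matrix (Fin 2) (Fin 2) ℝ}
    (hτ : ∀ x, τ' (c • x + b) = (c / |c|) • τ x) :
    PiHHJ (fun k => c • p k + b) τ' = (c / |c|) • PiHHJ p τ := by
  have hσ : (c / |c|) ^ 3 = c / |c| := by rw [pow_succ, div_abs_sq hc, one_mul]
  simp only [PiHHJ, Finset.smul_sum, smul_smul, edgeAvg_homothety, hτ, nvec_homothety,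
    qf_smul_smul, hσ, phiHHJ_homothety p c b hc]
  congr with j
  rw [edgeAvg, intervalIntegral.integral_const_mul, edgeAvg, mul_comm]

theorem sqrt_area_homothety :
    Real.sqrt (area (fun k => c • p k + b)) = |c| * Real.sqrt (area p) := by
  rw [area_homothety, Real.sqrt_mul (sq_nonneg c), Real.sqrt_sq_eq_abs]

theorem phiK_homothety (i : Fin 4) (x : ℝ × ℝ) :
    phiK (fun k => c • p k + b) i (c • x + b) = c ^ 3 / |c| * phiK p i x := by
  have h₁ : (c • x + b).1 - (centroid (fun k => c • p k + b)).1 =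
      c * (x.1 - (centroid p).1) := by
    simp only [centroid_homothety, Prod.fst_add, Prod.smul_fst, smul_eq_mul]; ring
  have h₂ : (c • x + b).2 - (centroid (fun k => c • p k + b)).2 =
      c * (x.2 - (centroid p).2) := by
    simp only [centroid_homothety, Prod.snd_add, Prod.smul_snd, smul_eq_mul]; ring
  fin_cases i <;>
    simp only [phiK, Fin.zero_eta, Fin.mk_one, Fin.reduceFinMk, Matrix.cons_val, h₁, h₂,
      sqrt_area_homothety] <;> ring

theorem hess_phiK_homothety (hc : c ≠ 0) (i : Fin 4) (x : ℝ × ℝ) :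
    hess (phiK (fun k => c • p k + b) i) (c • x + b) = (c / |c|) • hess (phiK p i) x := by
  have h := hess_comp_homothety (phiK (fun k => c • p k + b) i) c b x
  simp only [phiK_homothety, hess_const_mul] at h
  rw [← inv_smul_smul₀ (pow_ne_zero 2 hc) (hess _ _), ← h, smul_smul]
  congr 1
  field_simp

theorem tri_homothety : tri (fun k => c • p k + b) = (fun x => c • x + b) '' tri p := by
  let T : (ℝ × ℝ) →ᵃ[ℝ] ℝ × ℝ :=
    (c • LinearMap.id).toAffineMap + AffineMap.const ℝ _ b
  have hT : ⇑T = fun x => c • x + b := rfl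
  rw [tri, tri, ← hT, AffineMap.image_convexHull, hT]
  simp only [Set.image_insert_eq, Set.image_singleton]

end Homothety

theorem measurableSet_tri (p : Fin 3 → ℝ × ℝ) : MeasurableSet (tri p) :=
  ((Set.toFinite {p 0, p 1, p 2}).isCompact_convexHull (𝕜 := ℝ)).measurableSet

theorem gammaHHJ_homothety (p : Fin 3 → ℝ × ℝ) {c : ℝ} (hc : c ≠ 0) (b : ℝ × ℝ)
    (i j : Fin 4) :
    gammaHHJ (fun k => c • p k + b) i j = gammaHHJ p i j := by
  have hPi (l : Fin 4) := PiHHJ_homothety p c b hc (hess_phiK_homothety p c b hc l)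
  have hσ : (c / |c|) ^ 2 = 1 := div_abs_sq hc
  rw [gammaHHJ, tri_homothety, setIntegral_image_smul_add _ (measurableSet_tri p) hc]
  simp only [hess_phiK_homothety p c b hc, hPi, ← smul_sub, frob_smul_smul, hσ, one_mul,
    Module.finrank_prod, Module.finrank_self, area_homothety, smul_eq_mul]
  rw [gammaHHJ, abs_of_nonneg (pow_two_nonneg c), mul_inv, mul_mul_mul_comm,
    inv_mul_cancel₀ (pow_ne_zero 2 hc), one_mul]

end PaperStmt

open PaperStmt in
/-- The constants `γ^{ij}` are invariant under translations, dilations and point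
reflections of the triangle: if `p_i' = ε r p_i + b` with `r > 0` and `ε = ±1`, the new
vertices are again counterclockwise and `γ^{ij}(K') = γ^{ij}(K)` for all `1 ≤ i, j ≤ 4`. -/
theorem gammaHHJ_invariant
    (p : Fin 3 → ℝ × ℝ) (hp : Ccw p)
    (r : ℝ) (hr : 0 < r) (b : ℝ × ℝ) (ε : ℝ) (hε : ε = 1 ∨ ε = -1) :
    Ccw (fun k => (ε * r) • p k + b) ∧
    ∀ i j : Fin 4, gammaHHJ (fun k => (ε * r) • p k + b) i j = gammaHHJ p i j := by
  have hc : ε * r ≠ 0 := mul_ne_zero (by rcases hε with rfl | rfl <;> norm_num) hr.ne'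
  exact ⟨ccw_homothety p _ b hc hp, gammaHHJ_homothety p hc b⟩
end
end
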